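/- Let N ≥ 1 and let ψ be a unit vector in the N-qubit space ℂ^{2^N} with ⟨S_y⟩_ψ = 0. Set C = ⟨S_x⟩_ψ/(N/2) and ζ² = ⟨S_y²⟩_ψ/(N/4), and assume 0 < C < 1. If ζ² < 1 − C/artanh(C), then 4 Var_ψ(S_z) > N; that is, any pure state violating the multi-setting Bell-correlation witness has quantum Fisher information F(ψ, S_z) exceeding the separable-state bound N. -/

import Mathlib

open Matrix Finset

/-- Pauli matrix σx. -/
def σx : Matrix (Fin 2) (Fin 2) ℂ := !![0, 1; 1, 0]

/-- Pauli matrix σy. -/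
def σy : Matrix (Fin 2) (Fin 2) ℂ := !![0, -Complex.I; Complex.I, 0]

/-- Pauli matrix σz. -/
def σz : Matrix (Fin 2) (Fin 2) ℂ := !![1, 0; 0, -1]

/-- The single-qubit operator `M` acting on the `i`-th tensor factor of the
`N`-qubit space `ℂ^{2^N}` (identity on all other factors). -/
def siteOp {N : ℕ} (M : Matrix (Fin 2) (Fin 2) ℂ) (i : Fin N) :
    Matrix (Fin N → Fin 2) (Fin N → Fin 2) ℂ :=
  Matrix.of fun x y => M (x i) (y i) * ∏ j ∈ univ.erase i, if x j = y j then 1 else 0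

/-- The collective spin operator `(1/2) Σᵢ M⁽ⁱ⁾`. -/
noncomputable def collSpin {N : ℕ} (M : Matrix (Fin 2) (Fin 2) ℂ) :
    Matrix (Fin N → Fin 2) (Fin N → Fin 2) ℂ :=
  (2 : ℂ)⁻¹ • ∑ i : Fin N, siteOp M i

/-- Expectation `⟨ψ, A ψ⟩` (real part). -/
noncomputable def expval {N : ℕ} (A : Matrix (Fin N → Fin 2) (Fin N → Fin 2) ℂ)
    (ψ : (Fin N → Fin 2) → ℂ) : ℝ :=
  (star ψ ⬝ᵥ A.mulVec ψ).re

/-- Variance `⟨A²⟩_ψ − ⟨A⟩_ψ²`. -/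
noncomputable def variance {N : ℕ} (A : Matrix (Fin N → Fin 2) (Fin N → Fin 2) ℂ)
    (ψ : (Fin N → Fin 2) → ℂ) : ℝ :=
  expval (A * A) ψ - (expval A ψ) ^ 2

/-- Inverse hyperbolic tangent: `artanh x = (1/2) log((1+x)/(1−x))`. -/
noncomputable def artanh (x : ℝ) : ℝ := (1 / 2) * Real.log ((1 + x) / (1 - x))

lemma siteOp_apply {N : ℕ} (M : Matrix (Fin 2) (Fin 2) ℂ) (i : Fin N) (x y) :
    siteOp M i x y = M (x i) (y i) * if (∀ j, j ≠ i → x j = y j) then 1 else 0 := by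
  rw [siteOp, Matrix.of_apply, Finset.prod_boole]
  congr 1
  simp [Finset.mem_erase]

lemma siteOp_mul_same {N : ℕ} (A B : Matrix (Fin 2) (Fin 2) ℂ) (i : Fin N) :
    siteOp A i * siteOp B i = siteOp (A * B) i := by
  ext x y
  rw [Matrix.mul_apply, siteOp_apply, Matrix.mul_apply]
  by_cases hxy : ∀ j, j ≠ i → x j = y j
  · rw [if_pos hxy, mul_one]
    have key : ∀ z : Fin N → Fin 2,
        siteOp A i x z * siteOp B i z y =
          if Function.update x i (z i) = z then A (x i) (z i) * B (z i) (y i) else 0 := by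
      intro z
      rw [siteOp_apply, siteOp_apply]
      by_cases hz : Function.update x i (z i) = z
      · have h1 : ∀ j, j ≠ i → x j = z j := fun j hj => by
          rw [← hz, Function.update_of_ne hj]
        have h2 : ∀ j, j ≠ i → z j = y j := fun j hj => (h1 j hj).symm.trans (hxy j hj)
        rw [if_pos hz, if_pos h1, if_pos h2]; ring
      · rw [if_neg hz, if_neg, mul_zero, zero_mul]
        intro h1
        exact hz (funext fun j => by
          by_cases hj : j = i
          · subst hj; rw [Function.update_self]
          · rw [Function.update_of_ne hj]; exact h1 j hj)
    rw [Finset.sum_congr rfl fun z _ => key z, Finset.sum_ite, Finset.sum_const_zero, add_zero]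
    refine Finset.sum_nbij' (fun z => z i) (fun k => Function.update x i k) ?_ ?_ ?_ ?_ ?_
    · intro a _; exact Finset.mem_univ _
    · intro k hk
      simp only [Finset.mem_filter, Finset.mem_univ, true_and]
      rw [Function.update_self]
    · intro z hz
      simp only [Finset.mem_filter] at hz
      exact hz.2
    · intro k _
      simp only [Function.update_self]
    · intro z hz
      rfl
  · rw [if_neg hxy, mul_zero]
    refine Finset.sum_eq_zero fun z _ => ?_
    rw [siteOp_apply, siteOp_apply]
    by_cases h1 : ∀ j, j ≠ i → x j = z j
    · rw [if_pos h1,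
        if_neg (fun h2 : ∀ j, j ≠ i → z j = y j => hxy fun j hj => (h1 j hj).trans (h2 j hj))]
      ring
    · rw [if_neg h1]; ring

lemma siteOp_mul_apply_ne {N : ℕ} (A B : Matrix (Fin 2) (Fin 2) ℂ) {i j : Fin N}
    (hij : i ≠ j) (x y : Fin N → Fin 2) :
    (siteOp A i * siteOp B j) x y =
      A (x i) (y i) * B (x j) (y j) *
        if (∀ l, l ≠ i → l ≠ j → x l = y l) then 1 else 0 := by
  rw [Matrix.mul_apply]
  rw [Finset.sum_eq_single (Function.update x i (y i))]
  · rw [siteOp_apply, siteOp_apply, Function.update_self,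
      Function.update_of_ne (Ne.symm hij)]
    rw [if_pos (fun l hl => (Function.update_of_ne hl _ _).symm)]
    by_cases h : ∀ l, l ≠ i → l ≠ j → x l = y l
    · have h' : ∀ l, l ≠ j → Function.update x i (y i) l = y l := by
        intro l hl
        by_cases hli : l = i
        · subst hli; rw [Function.update_self]
        · rw [Function.update_of_ne hli]; exact h l hli hl
      rw [if_pos h, if_pos h']
      ring
    · have h' : ¬ ∀ l, l ≠ j → Function.update x i (y i) l = y l := by
        intro h2
        exact h fun l hli hlj => by
          have := h2 l hlj
          rwa [Function.update_of_ne hli] at this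
      rw [if_neg h, if_neg h']
      ring
  · intro z _ hz
    rw [siteOp_apply, siteOp_apply]
    by_cases h1 : ∀ l, l ≠ i → x l = z l
    · by_cases h2 : ∀ l, l ≠ j → z l = y l
      · exfalso
        apply hz
        funext l
        by_cases hli : l = i
        · subst hli; rw [Function.update_self]; exact h2 _ hij
        · rw [Function.update_of_ne hli]; exact (h1 l hli).symm
      · rw [if_pos h1, if_neg h2]; ring
    · rw [if_neg h1]; ring
  · intro h; exact absurd (Finset.mem_univ _) h

lemma siteOp_mul_comm {N : ℕ} (A B : Matrix (Fin 2) (Fin 2) ℂ) {i j : Fin N} (hij : i ≠ j) :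
    siteOp A i * siteOp B j = siteOp B j * siteOp A i := by
  ext x y
  rw [siteOp_mul_apply_ne A B hij, siteOp_mul_apply_ne B A (Ne.symm hij)]
  by_cases h : ∀ l, l ≠ i → l ≠ j → x l = y l
  · rw [if_pos h, if_pos (fun l a b => h l b a)]; ring
  · rw [if_neg h, if_neg (fun h' => h fun l a b => h' l b a)]; ring

lemma siteOp_sub {N : ℕ} (A B : Matrix (Fin 2) (Fin 2) ℂ) (i : Fin N) :
    siteOp (A - B) i = siteOp A i - siteOp B i := by
  ext x y
  simp only [siteOp, Matrix.of_apply, Matrix.sub_apply]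
  ring

lemma siteOp_smul {N : ℕ} (c : ℂ) (A : Matrix (Fin 2) (Fin 2) ℂ) (i : Fin N) :
    siteOp (c • A) i = c • siteOp A i := by
  ext x y
  simp only [siteOp, Matrix.of_apply, Matrix.smul_apply, smul_eq_mul]
  ring

lemma pauli_comm : σy * σz - σz * σy = (2 * Complex.I) • σx := by
  ext i j
  fin_cases i <;> fin_cases j <;>
    simp [σx, σy, σz, Matrix.mul_apply, Fin.sum_univ_two] <;> ring

lemma collSpin_commutator (N : ℕ) :
    collSpin (N := N) σy * collSpin σz - collSpin σz * collSpin σy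
      = Complex.I • collSpin σx := by
  have key : ∀ i j : Fin N, siteOp σy i * siteOp σz j - siteOp σz j * siteOp σy i
      = if i = j then (2 * Complex.I) • siteOp σx i else 0 := by
    intro i j
    by_cases h : i = j
    · subst h
      rw [if_pos rfl, siteOp_mul_same, siteOp_mul_same, ← siteOp_sub, pauli_comm, siteOp_smul]
    · rw [if_neg h, siteOp_mul_comm _ _ h, sub_self]
  unfold collSpin
  rw [smul_mul_assoc, mul_smul_comm, smul_mul_assoc, mul_smul_comm,
    Finset.sum_mul_sum, Finset.sum_mul_sum, smul_smul, smul_smul, ← smul_sub]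
  rw [show (∑ j : Fin N, ∑ i : Fin N, siteOp σz j * siteOp σy i)
      = ∑ i : Fin N, ∑ j : Fin N, siteOp σz j * siteOp σy i from Finset.sum_comm]
  rw [← Finset.sum_sub_distrib]
  have : (∑ i : Fin N, (∑ j : Fin N, siteOp σy i * siteOp σz j
        - ∑ j : Fin N, siteOp σz j * siteOp σy i))
      = ∑ i : Fin N, (2 * Complex.I) • siteOp σx i := by
    refine Finset.sum_congr rfl fun i _ => ?_
    rw [← Finset.sum_sub_distrib]
    rw [Finset.sum_congr rfl fun j _ => key i j]
    rw [Finset.sum_ite_eq]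
    simp
  rw [this, ← Finset.smul_sum, smul_smul, smul_smul]
  congr 1
  ring

lemma siteOp_conjTranspose {N : ℕ} (M : Matrix (Fin 2) (Fin 2) ℂ) (i : Fin N) :
    (siteOp M i)ᴴ = siteOp Mᴴ i := by
  ext x y
  rw [Matrix.conjTranspose_apply, siteOp_apply, siteOp_apply]
  by_cases h : ∀ j, j ≠ i → x j = y j
  · rw [if_pos (fun j hj => (h j hj).symm), if_pos h, mul_one, mul_one]; rfl
  · rw [if_neg (fun h' => h fun j hj => (h' j hj).symm), if_neg h, mul_zero, mul_zero, star_zero]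

lemma collSpin_conjTranspose {N : ℕ} (M : Matrix (Fin 2) (Fin 2) ℂ) :
    (collSpin (N := N) M)ᴴ = collSpin Mᴴ := by
  unfold collSpin
  rw [Matrix.conjTranspose_smul, Matrix.conjTranspose_sum]
  simp [siteOp_conjTranspose, Complex.star_def, map_inv₀]

lemma pauli_x_herm : σxᴴ = σx := by
  ext i j; fin_cases i <;> fin_cases j <;> simp [σx]

lemma pauli_y_herm : σyᴴ = σy := by
  ext i j; fin_cases i <;> fin_cases j <;> simp [σy]

lemma pauli_z_herm : σzᴴ = σz := by
  ext i j; fin_cases i <;> fin_cases j <;> simp [σz]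

variable {n : Type*} [Fintype n] [DecidableEq n]

lemma dot_mul_eq (A B : Matrix n n ℂ) (hA : Aᴴ = A) (ψ : n → ℂ) :
    star (A.mulVec ψ) ⬝ᵥ B.mulVec ψ = star ψ ⬝ᵥ (A * B).mulVec ψ := by
  rw [Matrix.star_mulVec, hA, ← Matrix.dotProduct_mulVec, Matrix.mulVec_mulVec]

lemma herm_dot_real (A : Matrix n n ℂ) (hA : Aᴴ = A) (ψ : n → ℂ) :
    star ψ ⬝ᵥ A.mulVec ψ = ((star ψ ⬝ᵥ A.mulVec ψ).re : ℂ) := by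
  have h : star (star ψ ⬝ᵥ A.mulVec ψ) = star ψ ⬝ᵥ A.mulVec ψ := by
    conv_rhs => rw [Matrix.star_dotProduct, Matrix.star_mulVec, hA,
      ← Matrix.dotProduct_mulVec]
  have him : (star ψ ⬝ᵥ A.mulVec ψ).im = 0 := by
    have := congrArg Complex.im h
    simp only [Complex.star_def, Complex.conj_im] at this
    linarith
  exact Complex.ext (by simp) (by simp [him])

lemma dot_self_re_nonneg (u : n → ℂ) : 0 ≤ (star u ⬝ᵥ u).re := by
  rw [dotProduct, Complex.re_sum]
  refine Finset.sum_nonneg fun i _ => ?_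
  have : star u i * u i = ((Complex.normSq (u i) : ℝ) : ℂ) := by
    rw [Pi.star_apply, Complex.star_def, mul_comm, Complex.mul_conj]
  rw [this, Complex.ofReal_re]
  exact Complex.normSq_nonneg _

lemma inner_eq_dot (u v : n → ℂ) :
    (inner (𝕜 := ℂ) ((WithLp.equiv 2 (n → ℂ)).symm u) ((WithLp.equiv 2 (n → ℂ)).symm v)) =
      star u ⬝ᵥ v := by
  simp [PiLp.inner_apply, dotProduct, RCLike.inner_apply, mul_comm]

lemma robertson (A B X : Matrix n n ℂ) (hA : Aᴴ = A) (hB : Bᴴ = B) (hX : Xᴴ = X)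
    (ψ : n → ℂ) (hψ : star ψ ⬝ᵥ ψ = 1)
    (hcomm : A * B - B * A = Complex.I • X) :
    (star ψ ⬝ᵥ X.mulVec ψ).re ^ 2 ≤
      4 * (star ψ ⬝ᵥ (A * A).mulVec ψ).re *
        ((star ψ ⬝ᵥ (B * B).mulVec ψ).re - (star ψ ⬝ᵥ B.mulVec ψ).re ^ 2) := by
  set b : ℝ := (star ψ ⬝ᵥ B.mulVec ψ).re with hb
  set B' : Matrix n n ℂ := B - (b : ℂ) • 1 with hB'def
  have hB' : B'ᴴ = B' := by
    rw [hB'def, Matrix.conjTranspose_sub, Matrix.conjTranspose_smul, hB,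
      Matrix.conjTranspose_one]
    norm_num
  have hcomm' : A * B' - B' * A = Complex.I • X := by
    rw [hB'def]
    simp only [Matrix.mul_sub, Matrix.sub_mul, mul_smul_comm, smul_mul_assoc,
      Matrix.mul_one, Matrix.one_mul]
    rw [← hcomm]; abel
  set u : n → ℂ := A.mulVec ψ with hu
  set v : n → ℂ := B'.mulVec ψ with hv
  set s : ℂ := star u ⬝ᵥ v with hs
  set x : ℝ := (star ψ ⬝ᵥ X.mulVec ψ).re with hx
  have h1 : s = star ψ ⬝ᵥ (A * B').mulVec ψ := dot_mul_eq A B' hA ψ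
  have h2 : star v ⬝ᵥ u = star ψ ⬝ᵥ (B' * A).mulVec ψ := dot_mul_eq B' A hB' ψ
  have h3 : star v ⬝ᵥ u = star s := Matrix.star_dotProduct _ _
  have h4 : s - star s = Complex.I * (x : ℂ) := by
    rw [← h3, h1, h2, ← dotProduct_sub, ← Matrix.sub_mulVec, hcomm',
      Matrix.smul_mulVec, dotProduct_smul, smul_eq_mul,
      herm_dot_real X hX ψ]
  have him : 2 * s.im = x := by
    have := congrArg Complex.im h4
    simp only [Complex.sub_im, Complex.star_def, Complex.conj_im, Complex.mul_im,
      Complex.I_re, Complex.I_im, Complex.ofReal_re, Complex.ofReal_im] at this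
    linarith
  -- Cauchy-Schwarz
  set u' := (WithLp.equiv 2 (n → ℂ)).symm u with hu'
  set v' := (WithLp.equiv 2 (n → ℂ)).symm v with hv'
  have hCS : ‖s‖ ≤ ‖u'‖ * ‖v'‖ := by
    rw [hs, ← inner_eq_dot u v]
    exact norm_inner_le_norm _ _
  have hun : ‖u'‖ ^ 2 = (star u ⬝ᵥ u).re := by
    rw [← inner_self_eq_norm_sq (𝕜 := ℂ), hu', inner_eq_dot]
    rfl
  have hvn : ‖v'‖ ^ 2 = (star v ⬝ᵥ v).re := by
    rw [← inner_self_eq_norm_sq (𝕜 := ℂ), hv', inner_eq_dot]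
    rfl
  have hsq : s.im ^ 2 ≤ (star u ⬝ᵥ u).re * (star v ⬝ᵥ v).re := by
    have h5 : s.im ^ 2 ≤ ‖s‖ ^ 2 := by
      rw [Complex.sq_norm, Complex.normSq_apply]
      nlinarith [sq_nonneg s.re]
    calc s.im ^ 2 ≤ ‖s‖ ^ 2 := h5
      _ ≤ (‖u'‖ * ‖v'‖) ^ 2 := by
          nlinarith [hCS, norm_nonneg s, norm_nonneg u', norm_nonneg v']
      _ = (star u ⬝ᵥ u).re * (star v ⬝ᵥ v).re := by rw [mul_pow, hun, hvn]
  -- identify the two moments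
  have huu : (star u ⬝ᵥ u).re = (star ψ ⬝ᵥ (A * A).mulVec ψ).re := by
    rw [hu, dot_mul_eq A A hA ψ]
  have hBB : B' * B' = B * B - (2 * (b:ℂ)) • B + ((b:ℂ) ^ 2) • 1 := by
    rw [hB'def]
    simp only [Matrix.sub_mul, Matrix.mul_sub, smul_mul_assoc, mul_smul_comm,
      Matrix.mul_one, Matrix.one_mul, smul_smul]
    rw [two_mul]
    module
  have hvv : (star v ⬝ᵥ v).re = (star ψ ⬝ᵥ (B * B).mulVec ψ).re - b ^ 2 := by
    rw [hv, dot_mul_eq B' B' hB' ψ, hBB]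
    rw [Matrix.add_mulVec, Matrix.sub_mulVec, Matrix.smul_mulVec,
      Matrix.smul_mulVec, Matrix.one_mulVec, dotProduct_add,
      dotProduct_sub, dotProduct_smul, dotProduct_smul, hψ,
      herm_dot_real B hB ψ]
    simp only [smul_eq_mul, mul_one, Complex.add_re, Complex.sub_re, Complex.mul_re,
      Complex.ofReal_re, Complex.ofReal_im, Complex.one_re, Complex.one_im,
      ← Complex.ofReal_pow, Complex.re_ofNat, Complex.im_ofNat]
    ring
  have hx2 : x ^ 2 = 4 * s.im ^ 2 := by rw [← him]; ring
  rw [← huu, ← hvv, hx2]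
  linarith [hsq]

lemma artanh_pos {x : ℝ} (hx0 : 0 < x) (hx1 : x < 1) : 0 < artanh x := by
  have h : (1 : ℝ) < (1 + x) / (1 - x) := by
    rw [lt_div_iff₀ (by linarith)]
    linarith
  have := Real.log_pos h
  rw [artanh]
  linarith

noncomputable def Gfun (t : ℝ) : ℝ :=
  t - (1 - t ^ 2) * ((1 / 2) * (Real.log (1 + t) - Real.log (1 - t)))

lemma hasDerivAt_Gfun {t : ℝ} (h1 : -1 < t) (h2 : t < 1) :
    HasDerivAt Gfun (t * (Real.log (1 + t) - Real.log (1 - t))) t := by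
  have h1' : (0 : ℝ) < 1 + t := by linarith
  have h2' : (0 : ℝ) < 1 - t := by linarith
  have d1 : HasDerivAt (fun t : ℝ => 1 + t) 1 t := by
    simpa using (hasDerivAt_id t).const_add (1 : ℝ)
  have d2 : HasDerivAt (fun t : ℝ => 1 - t) (-1) t := by
    simpa using (hasDerivAt_id t).const_sub (1 : ℝ)
  have dlog1 : HasDerivAt (fun t : ℝ => Real.log (1 + t)) (1 / (1 + t)) t :=
    d1.log (ne_of_gt h1')
  have dlog2 : HasDerivAt (fun t : ℝ => Real.log (1 - t)) ((-1) / (1 - t)) t :=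
    d2.log (ne_of_gt h2')
  have dinner : HasDerivAt (fun t : ℝ => (1 / 2) * (Real.log (1 + t) - Real.log (1 - t)))
      ((1 / 2) * (1 / (1 + t) - (-1) / (1 - t))) t :=
    (dlog1.sub dlog2).const_mul _
  have dquad : HasDerivAt (fun t : ℝ => 1 - t ^ 2) (-(2 * t)) t := by
    simpa using ((hasDerivAt_pow 2 t).const_sub (1 : ℝ))
  have dprod := dquad.mul dinner
  have dtotal := (hasDerivAt_id t).sub dprod
  convert dtotal using 1
  have h1n : (1 + t) ≠ 0 := ne_of_gt h1'
  have h2n : (1 - t) ≠ 0 := ne_of_gt h2'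
  · rfl
  · rfl
  · rfl
  field_simp
  ring

lemma artanh_le {x : ℝ} (hx0 : 0 < x) (hx1 : x < 1) : (1 - x ^ 2) * artanh x ≤ x := by
  have hsub : ∀ t ∈ Set.Icc (0 : ℝ) x, -1 < t ∧ t < 1 := by
    intro t ht
    exact ⟨by linarith [ht.1], by linarith [ht.2]⟩
  have hmono : MonotoneOn Gfun (Set.Icc 0 x) := by
    apply monotoneOn_of_deriv_nonneg (convex_Icc 0 x)
    · intro t ht
      exact (hasDerivAt_Gfun (hsub t ht).1 (hsub t ht).2).continuousAt.continuousWithinAt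
    · intro t ht
      rw [interior_Icc] at ht
      exact (hasDerivAt_Gfun (hsub t ⟨le_of_lt ht.1, le_of_lt ht.2⟩).1
        (hsub t ⟨le_of_lt ht.1, le_of_lt ht.2⟩).2).differentiableAt.differentiableWithinAt
    · intro t ht
      rw [interior_Icc] at ht
      have h1 := (hsub t ⟨le_of_lt ht.1, le_of_lt ht.2⟩).1
      have h2 := (hsub t ⟨le_of_lt ht.1, le_of_lt ht.2⟩).2
      rw [(hasDerivAt_Gfun h1 h2).deriv]
      have hlog : Real.log (1 - t) ≤ Real.log (1 + t) :=
        Real.log_le_log (by linarith) (by linarith [ht.1])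
      have ht0 : 0 ≤ t := le_of_lt ht.1
      nlinarith
  have hG : Gfun 0 ≤ Gfun x :=
    hmono (Set.left_mem_Icc.mpr (le_of_lt hx0)) (Set.right_mem_Icc.mpr (le_of_lt hx0))
      (le_of_lt hx0)
  have hG0 : Gfun 0 = 0 := by simp [Gfun]
  have hGx : Gfun x = x - (1 - x ^ 2) * artanh x := by
    rw [Gfun, artanh, Real.log_div (by linarith) (by linarith)]
  rw [hG0, hGx] at hG
  linarith

lemma witness_sq_bound {C : ℝ} (hC0 : 0 < C) (hC1 : C < 1) :
    1 - C / artanh C ≤ C ^ 2 := by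
  have hart := artanh_pos hC0 hC1
  have hle := artanh_le hC0 hC1
  have : 1 - C ^ 2 ≤ C / artanh C := by
    rw [le_div_iff₀ hart]
    linarith
  linarith

/-- Any pure state violating the multi-setting Bell-correlation witness
`ζ² ≥ 1 − C/artanh C` has QFI `F(ψ,S_z) = 4 Var_ψ(S_z) > N`. -/
theorem qfi_gt_shot_noise_of_multisetting_witness_violation (N : ℕ) (hN : 1 ≤ N)
    (ψ : (Fin N → Fin 2) → ℂ) (hψ : star ψ ⬝ᵥ ψ = 1)
    (hSy : expval (collSpin σy) ψ = 0)
    (C ζsq : ℝ)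
    (hC : C = expval (collSpin σx) ψ / (N / 2))
    (hζ : ζsq = expval (collSpin σy * collSpin σy) ψ / (N / 4))
    (hC0 : 0 < C) (hC1 : C < 1)
    (hviol : ζsq < 1 - C / artanh C) :
    (N : ℝ) < 4 * variance (collSpin σz) ψ := by
  set A := collSpin (N := N) σy with hA
  set B := collSpin (N := N) σz with hB
  set X := collSpin (N := N) σx with hX
  have hAh : Aᴴ = A := by rw [hA, collSpin_conjTranspose, pauli_y_herm]
  have hBh : Bᴴ = B := by rw [hB, collSpin_conjTranspose, pauli_z_herm]
  have hXh : Xᴴ = X := by rw [hX, collSpin_conjTranspose, pauli_x_herm]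
  have hcomm : A * B - B * A = Complex.I • X := collSpin_commutator N
  have hRob := robertson A B X hAh hBh hXh ψ hψ hcomm
  have hNpos : (0 : ℝ) < N := by
    have : (1 : ℝ) ≤ N := by exact_mod_cast hN
    linarith
  -- abbreviations
  set Sx : ℝ := expval X ψ with hSx
  set Sy2 : ℝ := expval (A * A) ψ with hSy2
  set V : ℝ := variance B ψ with hV
  have hSxval : Sx = C * ((N : ℝ) / 2) := by
    rw [hC]
    field_simp
  have hSy2val : Sy2 = ζsq * ((N : ℝ) / 4) := by
    rw [hζ]
    field_simp
  have hSy2nonneg : 0 ≤ Sy2 := by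
    have : star ψ ⬝ᵥ (A * A).mulVec ψ = star (A.mulVec ψ) ⬝ᵥ A.mulVec ψ :=
      (dot_mul_eq A A hAh ψ).symm
    rw [hSy2, expval, this]
    exact dot_self_re_nonneg _
  have hζ0 : 0 ≤ ζsq := by
    by_contra h
    push_neg at h
    nlinarith [hSy2val, hSy2nonneg]
  have hzC : ζsq < C ^ 2 := lt_of_lt_of_le hviol (witness_sq_bound hC0 hC1)
  have hRob' : Sx ^ 2 ≤ 4 * Sy2 * V := hRob
  have hVpos : 0 < V := by
    nlinarith [hRob', hSxval, hSy2val, mul_pos hC0 hNpos, hζ0, hSy2nonneg]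
  have hC2 : (0 : ℝ) < C ^ 2 := by positivity
  have hNV : (0 : ℝ) < (N : ℝ) * V := mul_pos hNpos hVpos
  have hlt : ζsq * ((N : ℝ) * V) < C ^ 2 * ((N : ℝ) * V) :=
    mul_lt_mul_of_pos_right hzC hNV
  have e1 : Sx ^ 2 = C ^ 2 * ((N : ℝ) ^ 2 / 4) := by rw [hSxval]; ring
  have e2 : 4 * Sy2 * V = ζsq * ((N : ℝ) * V) := by rw [hSy2val]; ring
  have hchain : C ^ 2 * ((N : ℝ) ^ 2 / 4) < C ^ 2 * ((N : ℝ) * V) := by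
    linarith [hRob', hlt, e1, e2]
  have h2 : (N : ℝ) ^ 2 / 4 < (N : ℝ) * V := (mul_lt_mul_iff_right₀ hC2).mp hchain
  nlinarith [h2, hNpos]
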